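/- arXiv:2210.03890 — 3 statements merged into one kernel-verified Lean document; each statement's English description precedes it below -/
import Mathlib

section
/- In the clustered matching setup where treatment is assigned at the cluster level (unit i's treatment is A_{c(i)}), with imputed potential outcomes Ŷ_i(A_{c(i)}) = Y_i and Ŷ_i(1−A_{c(i)}) = (1/M)·Σ_{j ∈ 𝒥_M(i)} Y_j, the clustered matching estimator of the average treatment effect satisfies the exact identity (1/N)·Σ_{i=1}^N (Ŷ_i(1) − Ŷ_i(0)) = (1/N)·Σ_{i=1}^N (2A_{c(i)} − 1)·(1 + K_M(i)/M)·Y_i. -/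
open Finset

/-
Writing `sᵢ = 2A_{c(i)} − 1 ∈ {±1}`, the imputed contrast of unit `i` is `sᵢ (Yᵢ − (1/M) Σ_{j ∈ 𝒥_M(i)} Yⱼ)`.
Exchanging the order of summation in the matched part, unit `j` collects one term from each of the
`K_M(j)` units that use it as a match, and each of those has sign `−sⱼ`; so the matched part
contributes `sⱼ K_M(j)/M · Yⱼ`.
-/

theorem ite_sub_ite_eq_two_mul_sub_one_mul {R : Type*} [Ring R] {a : ℕ} (ha : a = 0 ∨ a = 1)
    (y m : R) :
    (if a = 1 then y else m) - (if a = 1 then m else y) = (2 * (a : R) - 1) * (y - m) := by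
  rcases ha with rfl | rfl <;> norm_num

theorem two_mul_sub_one_eq_neg_of_eq_one_sub {R : Type*} [Ring R] {a b : ℕ} (ha : a = 0 ∨ a = 1)
    (hb : b = 1 - a) : 2 * (a : R) - 1 = -(2 * (b : R) - 1) := by
  rcases ha with rfl | rfl <;> subst hb <;> norm_num

theorem sum_mul_sum_eq_neg_sum_card_mul {ι R : Type*} [Fintype ι] [DecidableEq ι] [CommRing R]
    (J : ι → Finset ι) (s f : ι → R) (hs : ∀ i, ∀ j ∈ J i, s i = -s j) :
    ∑ i, s i * ∑ j ∈ J i, f j = -∑ j, ((univ.filter fun l => j ∈ J l).card : R) * s j * f j := by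
  calc ∑ i, s i * ∑ j ∈ J i, f j
      = ∑ i, ∑ j ∈ J i, s i * f j := by simp_rw [mul_sum]
    _ = ∑ j, ∑ i ∈ univ.filter (fun l => j ∈ J l), s i * f j := sum_comm' (by simp)
    _ = ∑ j, ∑ i ∈ univ.filter (fun l => j ∈ J l), -(s j * f j) :=
        sum_congr rfl fun j _ => sum_congr rfl fun i hi => by
          rw [hs i j (mem_filter.1 hi).2, neg_mul]
    _ = -∑ j, ((univ.filter fun l => j ∈ J l).card : R) * s j * f j := by
        simp only [sum_const, nsmul_eq_mul, sum_neg_distrib, mul_neg, mul_assoc]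

theorem clustered_matching_estimator_ate_identity_general
    (N R M : ℕ)
    (c : Fin N → Fin R)
    (A : Fin R → ℕ) (hA : ∀ r, A r = 0 ∨ A r = 1)
    (Y : Fin N → ℝ)
    (J : Fin N → Finset (Fin N))
    (hJopp : ∀ i, ∀ j ∈ J i, A (c j) = 1 - A (c i)) :
    (1 / (N : ℝ)) *
        ∑ i, ((if A (c i) = 1 then Y i else (1 / (M : ℝ)) * ∑ j ∈ J i, Y j)
          - (if A (c i) = 1 then (1 / (M : ℝ)) * ∑ j ∈ J i, Y j else Y i))
      = (1 / (N : ℝ)) *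
        ∑ i, (2 * (A (c i) : ℝ) - 1) *
          (1 + ((Finset.univ.filter fun l => i ∈ J l).card : ℝ) / (M : ℝ)) * Y i := by
  have matched := sum_mul_sum_eq_neg_sum_card_mul J (fun i => 2 * (A (c i) : ℝ) - 1) Y
    fun i j hj => two_mul_sub_one_eq_neg_of_eq_one_sub (hA (c i)) (hJopp i j hj)
  congr 1
  simp only [ite_sub_ite_eq_two_mul_sub_one_mul (hA (c _)), mul_sub, sum_sub_distrib,
    mul_left_comm _ (1 / (M : ℝ)), ← mul_sum]
  rw [matched, mul_neg, sub_neg_eq_add, mul_sum, ← sum_add_distrib]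
  exact sum_congr rfl fun i _ => by ring

/-- In the clustered matching setup with cluster-level treatment assignment,
the clustered ATE matching estimator written as the average of imputed contrasts equals
`(1/N)·Σᵢ (2A_{c(i)} − 1)·(1 + K_M(i)/M)·Yᵢ`. -/
theorem clustered_matching_estimator_ate_identity
    (N R M : ℕ) (hN : 1 ≤ N) (hR : 1 ≤ R) (hM : 1 ≤ M)
    (c : Fin N → Fin R)
    (A : Fin R → ℕ) (hA : ∀ r, A r = 0 ∨ A r = 1)
    (Y : Fin N → ℝ)
    (J : Fin N → Finset (Fin N))
    (hJcard : ∀ i, (J i).card = M)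
    (hJopp : ∀ i, ∀ j ∈ J i, A (c j) = 1 - A (c i)) :
    (1 / (N : ℝ)) *
        ∑ i, ((if A (c i) = 1 then Y i else (1 / (M : ℝ)) * ∑ j ∈ J i, Y j)
          - (if A (c i) = 1 then (1 / (M : ℝ)) * ∑ j ∈ J i, Y j else Y i))
      = (1 / (N : ℝ)) *
        ∑ i, (2 * (A (c i) : ℝ) - 1) *
          (1 + ((Finset.univ.filter fun l => i ∈ J l).card : ℝ) / (M : ℝ)) * Y i :=
  clustered_matching_estimator_ate_identity_general N R M c A hA Y J hJopp
end

section
/- In the clustered matching setup where treatment is assigned at the cluster level (unit i's treatment is A_{c(i)}), for ANY two functions μ₀, μ₁ : 𝒮 → ℝ of the covariates S_i, the clustered matching estimator τ̂_mat := (1/N)·Σ_{i=1}^N (2A_{c(i)} − 1)·(1 + K_M(i)/M)·Y_i decomposes exactly as τ̂_mat = τ̄ + E_M + B_M, where τ̄ = (1/N)·Σ_i (μ₁(S_i) − μ₀(S_i)), E_M = (1/N)·Σ_i (2A_{c(i)} − 1)·(1 + K_M(i)/M)·(Y_i − μ_{A_{c(i)}}(S_i)), and B_M = (1/N)·Σ_i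 (2A_{c(i)} − 1)·(1/M)·Σ_{j ∈ 𝒥_M(i)} (μ_{1−A_{c(i)}}(S_i) − μ_{1−A_{c(i)}}(S_j)). -/
open Finset

/-!
Write `ε_i = 2 A_{c(i)} - 1`. Removing `E_M`, the identity says that
`∑ ε_i (1 + K_M(i)/M) μ_{A_{c(i)}}(S_i) = N τ̄ + N B_M`. Since a match `j ∈ 𝒥_M(i)` lies in the
opposite arm, the matched term `-ε_i μ_{1-A_{c(i)}}(S_j)` of `B_M` equals `ε_j μ_{A_{c(j)}}(S_j)`,
and unit `j` is matched exactly `K_M(j)` times; the unmatched part `ε_i μ_{1-A_{c(i)}}(S_i)` of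
`B_M` combines with `ε_i μ_{A_{c(i)}}(S_i)` into `μ₁(S_i) - μ₀(S_i)`.
-/

theorem Finset.sum_sum_eq_sum_card_filter_nsmul {ι M : Type*} [Fintype ι] [DecidableEq ι]
    [AddCommMonoid M] (J : ι → Finset ι) (f : ι → M) :
    ∑ i, ∑ j ∈ J i, f j = ∑ j, #{l | j ∈ J l} • f j := by
  rw [sum_comm' (t' := univ) (s' := fun j => {l | j ∈ J l}) (by simp)]
  simp only [sum_const]

theorem sum_mul_inv_card_mul_sum_sub {ι 𝕜 : Type*} [Fintype ι] [DecidableEq ι] [Field 𝕜]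
    [CharZero 𝕜] (J : ι → Finset ι) {M : ℕ} (hM : M ≠ 0) (hJ : ∀ i, #(J i) = M)
    (w u f : ι → 𝕜) (v : ι → ι → 𝕜) (hv : ∀ i, ∀ j ∈ J i, w i * v i j = -f j) :
    ∑ i, w i * (1 / (M : 𝕜) * ∑ j ∈ J i, (u i - v i j))
      = ∑ i, (w i * u i + (#{l | i ∈ J l} : 𝕜) / M * f i) := by
  have hM' : (M : 𝕜) ≠ 0 := Nat.cast_ne_zero.mpr hM
  have hrow : ∀ i, w i * (1 / (M : 𝕜) * ∑ j ∈ J i, (u i - v i j))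
      = w i * u i + 1 / (M : 𝕜) * ∑ j ∈ J i, f j := by
    intro i
    have hsum : w i * ∑ j ∈ J i, (u i - v i j) = M * (w i * u i) + ∑ j ∈ J i, f j :=
      calc w i * ∑ j ∈ J i, (u i - v i j) = ∑ j ∈ J i, (w i * u i + f j) := by
            rw [mul_sum]
            exact sum_congr rfl fun j hj => by rw [mul_sub, hv i j hj, sub_neg_eq_add]
        _ = M * (w i * u i) + ∑ j ∈ J i, f j := by
            rw [sum_add_distrib, sum_const, hJ, nsmul_eq_mul]
    rw [mul_left_comm, hsum]
    field_simp
  rw [sum_congr rfl fun i _ => hrow i, sum_add_distrib, ← mul_sum,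
    sum_sum_eq_sum_card_filter_nsmul, mul_sum, ← sum_add_distrib]
  simp only [nsmul_eq_mul, div_eq_mul_inv, one_mul, mul_assoc, mul_left_comm]

theorem sign_mul_ite_sub_ite {R : Type*} [CommRing R] {a : ℕ} (ha : a = 0 ∨ a = 1) (u v : R) :
    (2 * (a : R) - 1) * ((if a = 1 then v else u) - (if a = 1 then u else v)) = v - u := by
  rcases ha with rfl | rfl <;> norm_num

theorem sign_mul_ite_eq_neg_of_eq_one_sub {R : Type*} [CommRing R] {a b : ℕ}
    (ha : a = 0 ∨ a = 1) (hb : b = 1 - a) (u v : R) :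
    (2 * (a : R) - 1) * (if a = 1 then u else v)
      = -((2 * (b : R) - 1) * (if b = 1 then v else u)) := by
  rcases ha with rfl | rfl <;> subst hb <;> norm_num

theorem clustered_matching_estimator_ate_decomposition_general
    {𝒮 : Type*}
    (N R M : ℕ) (hM : 1 ≤ M)
    (c : Fin N → Fin R)
    (A : Fin R → ℕ) (hA : ∀ r, A r = 0 ∨ A r = 1)
    (Y : Fin N → ℝ) (S : Fin N → 𝒮)
    (J : Fin N → Finset (Fin N))
    (hJcard : ∀ i, (J i).card = M)
    (hJopp : ∀ i, ∀ j ∈ J i, A (c j) = 1 - A (c i))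
    (μ₀ μ₁ : 𝒮 → ℝ) :
    (1 / (N : ℝ)) *
        ∑ i, (2 * (A (c i) : ℝ) - 1) *
          (1 + ((Finset.univ.filter fun l => i ∈ J l).card : ℝ) / (M : ℝ)) * Y i
      = (1 / (N : ℝ)) * ∑ i, (μ₁ (S i) - μ₀ (S i))
        + (1 / (N : ℝ)) *
            ∑ i, (2 * (A (c i) : ℝ) - 1) *
              (1 + ((Finset.univ.filter fun l => i ∈ J l).card : ℝ) / (M : ℝ)) *
              (Y i - (if A (c i) = 1 then μ₁ (S i) else μ₀ (S i)))
        + (1 / (N : ℝ)) *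
            ∑ i, (2 * (A (c i) : ℝ) - 1) *
              ((1 / (M : ℝ)) *
                ∑ j ∈ J i,
                  ((if A (c i) = 1 then μ₀ (S i) else μ₁ (S i))
                    - (if A (c i) = 1 then μ₀ (S j) else μ₁ (S j)))) := by
  rw [← mul_add, ← mul_add, sum_mul_inv_card_mul_sum_sub J (by omega) hJcard
    (f := fun j => (2 * (A (c j) : ℝ) - 1) * (if A (c j) = 1 then μ₁ (S j) else μ₀ (S j)))
    (hv := fun i j hj => sign_mul_ite_eq_neg_of_eq_one_sub (hA _) (hJopp i j hj) _ _),
    ← sum_add_distrib, ← sum_add_distrib]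
  congr 1
  refine sum_congr rfl fun i _ => ?_
  linear_combination sign_mul_ite_sub_ite (hA (c i)) (μ₀ (S i)) (μ₁ (S i))

/-- Exact decomposition of the clustered ATE matching estimator,
`τ̂_mat = τ̄ + E_M + B_M`, for any functions `μ₀, μ₁ : 𝒮 → ℝ` of the covariates. -/
theorem clustered_matching_estimator_ate_decomposition
    {𝒮 : Type*}
    (N R M : ℕ) (hN : 1 ≤ N) (hR : 1 ≤ R) (hM : 1 ≤ M)
    (c : Fin N → Fin R)
    (A : Fin R → ℕ) (hA : ∀ r, A r = 0 ∨ A r = 1)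
    (Y : Fin N → ℝ) (S : Fin N → 𝒮)
    (J : Fin N → Finset (Fin N))
    (hJcard : ∀ i, (J i).card = M)
    (hJopp : ∀ i, ∀ j ∈ J i, A (c j) = 1 - A (c i))
    (μ₀ μ₁ : 𝒮 → ℝ) :
    (1 / (N : ℝ)) *
        ∑ i, (2 * (A (c i) : ℝ) - 1) *
          (1 + ((Finset.univ.filter fun l => i ∈ J l).card : ℝ) / (M : ℝ)) * Y i
      = (1 / (N : ℝ)) * ∑ i, (μ₁ (S i) - μ₀ (S i))
        + (1 / (N : ℝ)) *
            ∑ i, (2 * (A (c i) : ℝ) - 1) *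
              (1 + ((Finset.univ.filter fun l => i ∈ J l).card : ℝ) / (M : ℝ)) *
              (Y i - (if A (c i) = 1 then μ₁ (S i) else μ₀ (S i)))
        + (1 / (N : ℝ)) *
            ∑ i, (2 * (A (c i) : ℝ) - 1) *
              ((1 / (M : ℝ)) *
                ∑ j ∈ J i,
                  ((if A (c i) = 1 then μ₀ (S i) else μ₁ (S i))
                    - (if A (c i) = 1 then μ₀ (S j) else μ₁ (S j)))) :=
  clustered_matching_estimator_ate_decomposition_general N R M hM c A hA Y S J hJcard hJopp μ₀ μ₁
end

section
/- With N ≥ 1 units, binary treatments A_i ∈ {0,1}, outcomes Y_i ∈ ℝ, covariates X_i ∈ 𝒳, M ≥ 1 matches per unit drawn from the opposite treatment group, K_M(i) the number of times unit i is used as a match, and ANY two functions μ̂₀, μ̂₁ : 𝒳 → ℝ, the bias-corrected matching estimator τ̂ := τ̂_mat − B̂_M, where τ̂_mat = (1/N)·Σ_i (2A_i − 1)·(1 + K_M(i)/M)·Y_i and B̂_M = (1/N)·Σ_i (2A_i − 1)·(1/M)·Σ_{j ∈ 𝒥_M(i)} (μ̂_{1−A_i}(X_i) − μ̂_{1−A_i}(X_j)),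 admits the exact linear representation τ̂ = (1/N)·Σ_{i=1}^N τ̂_i with τ̂_i := (μ̂₁(X_i) − μ̂₀(X_i)) + (2A_i − 1)·(1 + K_M(i)/M)·(Y_i − μ̂_{A_i}(X_i)). -/
open Finset

/-!
Double counting is the whole point. A matched pair `(i, j)` with `j ∈ 𝒥_M(i)` has `A_j = 1 − A_i`, so
`μ̂_{1−A_i}(X_j) = μ̂_{A_j}(X_j)` and `2A_i − 1 = −(2A_j − 1)`; summing the bias correction over `i`
first therefore collects `K_M(j)` copies of `−(2A_j − 1) μ̂_{A_j}(X_j)` for each `j`. This turns `B̂_M`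
into `(1/N) Σ_i (2A_i − 1) (μ̂_{1−A_i}(X_i) + K_M(i)/M · μ̂_{A_i}(X_i))`, and
`(2A_i − 1)(μ̂_{A_i}(X_i) − μ̂_{1−A_i}(X_i)) = μ̂₁(X_i) − μ̂₀(X_i)` gives the linear form.
-/

section Matching

variable {ι 𝕜 : Type*} [Fintype ι] [DecidableEq ι]

def matchCount (J : ι → Finset ι) (i : ι) : ℕ := #{l | i ∈ J l}

theorem sum_sum_eq_sum_matchCount_smul {β : Type*} [AddCommMonoid β] (J : ι → Finset ι)
    (g : ι → β) : ∑ i, ∑ j ∈ J i, g j = ∑ j, matchCount J j • g j := by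
  rw [sum_comm' (t' := univ) (s' := fun j => {l | j ∈ J l}) (by simp)]
  simp only [sum_const, matchCount]

variable [Field 𝕜] [CharZero 𝕜] {J : ι → Finset ι} {M : ℕ} {s : ι → 𝕜}

theorem bias_correction_sum_eq (hM : M ≠ 0) (hcard : ∀ i, #(J i) = M)
    (hopp : ∀ i, ∀ j ∈ J i, s j = -s i) (a b : ι → 𝕜) :
    ∑ i, s i * ((1 / M) * ∑ j ∈ J i, (b i - a j))
      = ∑ i, (s i * b i + s i * (matchCount J i / M) * a i) := by
  have hpaired : ∑ i, s i * ∑ j ∈ J i, a j = ∑ j, matchCount J j • -(s j * a j) := by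
    rw [← sum_sum_eq_sum_matchCount_smul]
    refine sum_congr rfl fun i _ => ?_
    rw [mul_sum]
    exact sum_congr rfl fun j hj => by rw [hopp i j hj]; ring
  have hM' : (M : 𝕜) ≠ 0 := Nat.cast_ne_zero.mpr hM
  calc ∑ i, s i * ((1 / M) * ∑ j ∈ J i, (b i - a j))
      = ∑ i, s i * b i - (1 / M) * ∑ i, s i * ∑ j ∈ J i, a j := by
        rw [mul_sum, ← sum_sub_distrib]
        refine sum_congr rfl fun i _ => ?_
        rw [sum_sub_distrib, sum_const, hcard]
        field_simp
        ring
    _ = _ := by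
        rw [hpaired, mul_sum, ← sum_sub_distrib]
        refine sum_congr rfl fun i _ => ?_
        rw [nsmul_eq_mul]
        ring

theorem matching_sum_sub_bias_correction_sum_eq (hM : M ≠ 0) (hcard : ∀ i, #(J i) = M)
    (hopp : ∀ i, ∀ j ∈ J i, s j = -s i) (Y a b : ι → 𝕜) :
    ∑ i, s i * (1 + matchCount J i / M) * Y i - ∑ i, s i * ((1 / M) * ∑ j ∈ J i, (b i - a j))
      = ∑ i, (s i * (a i - b i) + s i * (1 + matchCount J i / M) * (Y i - a i)) := by
  rw [bias_correction_sum_eq hM hcard hopp, ← sum_sub_distrib]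
  exact sum_congr rfl fun i _ => by ring

end Matching

section BinaryTreatment

variable {R : Type*} [Ring R] {a b : ℕ}

theorem two_mul_cast_sub_one_of_eq_one_sub (ha : a = 0 ∨ a = 1) (hb : b = 1 - a) :
    2 * (b : R) - 1 = -(2 * (a : R) - 1) := by
  rcases ha with rfl | rfl <;> subst hb <;> norm_num

theorem ite_eq_one_swap_of_eq_one_sub {α : Type*} (ha : a = 0 ∨ a = 1) (hb : b = 1 - a) (u v : α) :
    (if a = 1 then u else v) = if b = 1 then v else u := by
  rcases ha with rfl | rfl <;> subst hb <;> simp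

theorem two_mul_cast_sub_one_mul_ite_sub_ite (ha : a = 0 ∨ a = 1) (u v : R) :
    (2 * (a : R) - 1) * ((if a = 1 then u else v) - if a = 1 then v else u) = u - v := by
  rcases ha with rfl | rfl <;> norm_num

end BinaryTreatment

theorem bias_corrected_matching_estimator_linear_form_general
    {𝒳 : Type*}
    (N M : ℕ) (hM : 1 ≤ M)
    (A : Fin N → ℕ) (hA : ∀ i, A i = 0 ∨ A i = 1)
    (Y : Fin N → ℝ) (X : Fin N → 𝒳)
    (J : Fin N → Finset (Fin N))
    (hJcard : ∀ i, (J i).card = M)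
    (hJopp : ∀ i, ∀ j ∈ J i, A j = 1 - A i)
    (μhat₀ μhat₁ : 𝒳 → ℝ) :
    (1 / (N : ℝ)) *
        ∑ i, (2 * (A i : ℝ) - 1) *
          (1 + ((Finset.univ.filter fun l => i ∈ J l).card : ℝ) / (M : ℝ)) * Y i
      - (1 / (N : ℝ)) *
          ∑ i, (2 * (A i : ℝ) - 1) *
            ((1 / (M : ℝ)) *
              ∑ j ∈ J i,
                ((if A i = 1 then μhat₀ (X i) else μhat₁ (X i))
                  - (if A i = 1 then μhat₀ (X j) else μhat₁ (X j))))
      = (1 / (N : ℝ)) *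
          ∑ i, ((μhat₁ (X i) - μhat₀ (X i))
            + (2 * (A i : ℝ) - 1) *
              (1 + ((Finset.univ.filter fun l => i ∈ J l).card : ℝ) / (M : ℝ)) *
              (Y i - (if A i = 1 then μhat₁ (X i) else μhat₀ (X i)))) := by
  have hbias : ∀ i, ∑ j ∈ J i, ((if A i = 1 then μhat₀ (X i) else μhat₁ (X i))
      - if A i = 1 then μhat₀ (X j) else μhat₁ (X j))
      = ∑ j ∈ J i, ((if A i = 1 then μhat₀ (X i) else μhat₁ (X i))
      - if A j = 1 then μhat₁ (X j) else μhat₀ (X j)) := fun i =>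
    sum_congr rfl fun j hj => by
      rw [ite_eq_one_swap_of_eq_one_sub (hA i) (hJopp i j hj) (μhat₀ (X j))]
  have hcate : ∀ i, μhat₁ (X i) - μhat₀ (X i) = (2 * (A i : ℝ) - 1) *
      ((if A i = 1 then μhat₁ (X i) else μhat₀ (X i)) -
        if A i = 1 then μhat₀ (X i) else μhat₁ (X i)) := fun i =>
    (two_mul_cast_sub_one_mul_ite_sub_ite (hA i) _ _).symm
  simp only [hbias, hcate]
  rw [← mul_sub]
  exact congrArg _ (matching_sum_sub_bias_correction_sum_eq (by omega) hJcard
    (fun i j hj => two_mul_cast_sub_one_of_eq_one_sub (hA i) (hJopp i j hj)) Y _ _)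

/-- The bias-corrected ATE matching estimator `τ̂ = τ̂_mat − B̂_M` admits the
exact linear representation `τ̂ = (1/N)·Σᵢ τ̂ᵢ` with
`τ̂ᵢ = (μhat₁(Xᵢ) − μhat₀(Xᵢ)) + (2Aᵢ − 1)·(1 + K_M(i)/M)·(Yᵢ − μhat_{Aᵢ}(Xᵢ))`. -/
theorem bias_corrected_matching_estimator_linear_form
    {𝒳 : Type*}
    (N M : ℕ) (hN : 1 ≤ N) (hM : 1 ≤ M)
    (A : Fin N → ℕ) (hA : ∀ i, A i = 0 ∨ A i = 1)
    (Y : Fin N → ℝ) (X : Fin N → 𝒳)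
    (J : Fin N → Finset (Fin N))
    (hJcard : ∀ i, (J i).card = M)
    (hJopp : ∀ i, ∀ j ∈ J i, A j = 1 - A i)
    (μhat₀ μhat₁ : 𝒳 → ℝ) :
    (1 / (N : ℝ)) *
        ∑ i, (2 * (A i : ℝ) - 1) *
          (1 + ((Finset.univ.filter fun l => i ∈ J l).card : ℝ) / (M : ℝ)) * Y i
      - (1 / (N : ℝ)) *
          ∑ i, (2 * (A i : ℝ) - 1) *
            ((1 / (M : ℝ)) *
              ∑ j ∈ J i,
                ((if A i = 1 then μhat₀ (X i) else μhat₁ (X i))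
                  - (if A i = 1 then μhat₀ (X j) else μhat₁ (X j))))
      = (1 / (N : ℝ)) *
          ∑ i, ((μhat₁ (X i) - μhat₀ (X i))
            + (2 * (A i : ℝ) - 1) *
              (1 + ((Finset.univ.filter fun l => i ∈ J l).card : ℝ) / (M : ℝ)) *
              (Y i - (if A i = 1 then μhat₁ (X i) else μhat₀ (X i)))) :=
  bias_corrected_matching_estimator_linear_form_general N M hM A hA Y X J hJcard hJopp μhat₀ μhat₁
end
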